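/- arXiv:0802.4020 — 2 statements merged into one kernel-verified Lean document; each statement's English description precedes it below -/
import Mathlib

section
/- Let P_l denote the Legendre polynomial of degree l. Then sup_{θ∈[0,π]} |d/dθ P_l(cos θ)| ≤ 3l, hence for any θ₀, θ ≥ 0 with θ₀+θ ≤ π one has |P_l(cos(θ₀+θ)) − P_l(cos θ₀)| ≤ 3lθ. -/
open Polynomial

/-- The `l`-th Legendre polynomial, via the Rodrigues formula, normalized so that
`P_l(1) = 1`. -/
noncomputable def legendreP (l : ℕ) : Polynomial ℝ :=
  C ((2 ^ l * (l.factorial : ℝ))⁻¹) * derivative^[l] ((X ^ 2 - 1) ^ l)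

lemma Dcomm (m : ℕ) (p : ℝ[X]) :
    derivative (derivative^[m] p) = derivative^[m] (derivative p) := by
  rw [← Function.iterate_succ_apply' derivative, Function.iterate_succ_apply]

lemma L1 (m : ℕ) (p : ℝ[X]) :
    derivative^[m+1] (X * p) =
      X * derivative^[m+1] p + C ((m:ℝ)+1) * derivative^[m] p := by
  induction m generalizing p with
  | zero => simp [derivative_mul]; ring
  | succ m ih =>
      rw [Function.iterate_succ_apply' derivative (m+1), ih]
      simp [derivative_mul, derivative_C_mul, Dcomm, Function.iterate_succ_apply,
        Nat.cast_succ]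
      ring
lemma L2 (m : ℕ) (p : ℝ[X]) :
    derivative^[m+2] ((X^2 - 1) * p) =
      (X^2 - 1) * derivative^[m+2] p + C (2*((m:ℝ)+2)) * (X * derivative^[m+1] p)
        + C (((m:ℝ)+2)*((m:ℝ)+1)) * derivative^[m] p := by
  induction m generalizing p with
  | zero =>
      show derivative (derivative _) = _
      simp [derivative_mul, derivative_C_mul, Dcomm, Function.iterate_succ_apply, map_ofNat]
      ring
  | succ m ih =>
      rw [Function.iterate_succ_apply' derivative (m+2), ih]
      simp [derivative_mul, derivative_C_mul, Dcomm, Function.iterate_succ_apply,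
        Nat.cast_succ, map_ofNat]
      ring

lemma base (l : ℕ) (hl : 1 ≤ l) :
    (X^2 - 1 : ℝ[X]) * derivative ((X^2-1)^l) = C (2*(l:ℝ)) * (X * (X^2-1)^l) := by
  have h : ((X:ℝ[X])^2 - 1) * ((X^2-1)^(l-1)) = (X^2-1)^l := by
    rw [← pow_succ']
    congr 1
    omega
  rw [derivative_pow, ← h]
  push_cast [map_mul, map_ofNat]
  simp only [derivative_sub, derivative_one, derivative_X_pow, sub_zero, map_mul, map_ofNat]
  push_cast [map_ofNat]
  ring

lemma ode (l : ℕ) (hl : 1 ≤ l) :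
    (X^2 - 1 : ℝ[X]) * derivative^[l+2] ((X^2-1)^l)
      + C 2 * (X * derivative^[l+1] ((X^2-1)^l))
      = C ((l:ℝ)*((l:ℝ)+1)) * derivative^[l] ((X^2-1)^l) := by
  obtain ⟨m, rfl⟩ : ∃ m, l = m + 1 := ⟨l - 1, by omega⟩
  set u : ℝ[X] := (X^2-1)^(m+1) with hu
  have h := congrArg (derivative^[m+2]) (base (m+1) (by omega))
  rw [iterate_derivative_C_mul, L2 m (derivative u), L1 (m+1) u] at h
  simp only [Dcomm, ← Function.iterate_succ_apply derivative, Nat.succ_eq_add_one,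
    map_mul, map_add, map_ofNat, map_one, map_natCast,
    show m+1+1 = m+2 from rfl, show m+2+1 = m+3 from rfl] at h ⊢
  push_cast at h ⊢
  linear_combination h

lemma odeP (l : ℕ) (hl : 1 ≤ l) :
    (X^2 - 1 : ℝ[X]) * derivative (derivative (legendreP l))
      + C 2 * (X * derivative (legendreP l))
      = C ((l:ℝ)*((l:ℝ)+1)) * legendreP l := by
  unfold legendreP
  rw [derivative_C_mul, derivative_C_mul]
  have h := ode l hl
  rw [show derivative (derivative (derivative^[l] ((X^2-1:ℝ[X])^l)))
      = derivative^[l+2] ((X^2-1:ℝ[X])^l) by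
    rw [← Function.iterate_succ_apply' derivative, ← Function.iterate_succ_apply' derivative],
    show derivative (derivative^[l] ((X^2-1:ℝ[X])^l)) = derivative^[l+1] ((X^2-1:ℝ[X])^l) by
    rw [← Function.iterate_succ_apply' derivative]]
  linear_combination (C ((2 ^ l * (l.factorial : ℝ))⁻¹)) * h

lemma split (l : ℕ) : ((X:ℝ[X])^2 - 1)^l = (X - C 1)^l * (X + C 1)^l := by
  rw [← mul_pow]; congr 1; simp; ring

lemma legendre_eval_one (l : ℕ) : (legendreP l).eval 1 = 1 := by
  unfold legendreP
  rw [split, Polynomial.iterate_derivative_mul, eval_mul, eval_C, eval_finset_sum]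
  have hsum : ∀ k ∈ Finset.range (l+1), k ≠ 0 →
      eval 1 (l.choose k • (derivative^[l-k] ((X - C 1:ℝ[X])^l) * derivative^[k] ((X + C 1:ℝ[X])^l))) = 0 := by
    intro k hk hk0
    rw [iterate_derivative_X_sub_pow]
    have h1 : l - (l - k) = k := by simp at hk; omega
    rw [h1]
    simp [eval_pow, hk0]
  rw [Finset.sum_eq_single 0 hsum (by simp)]
  rw [iterate_derivative_X_sub_pow, Nat.sub_zero, Nat.sub_self, pow_zero,
    Nat.descFactorial_self]
  simp only [Nat.choose_zero_right, one_smul, Function.iterate_zero_apply, nsmul_eq_mul,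
    mul_one, eval_mul, eval_natCast, eval_pow, eval_add, eval_X, eval_C]
  have h2 : (2:ℝ)^l * l.factorial ≠ 0 := by positivity
  norm_num
  field_simp

lemma legendre_eval_neg_one (l : ℕ) : (legendreP l).eval (-1) = (-1)^l := by
  unfold legendreP
  rw [split, Polynomial.iterate_derivative_mul, eval_mul, eval_C, eval_finset_sum]
  have hsum : ∀ k ∈ Finset.range (l+1), k ≠ l →
      eval (-1) (l.choose k • (derivative^[l-k] ((X - C 1:ℝ[X])^l) * derivative^[k] ((X + C 1:ℝ[X])^l))) = 0 := by
    intro k hk hkl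
    rw [iterate_derivative_X_add_pow]
    have hne : l - k ≠ 0 := by simp at hk; omega
    simp [eval_pow, hne]
  rw [Finset.sum_eq_single l hsum (by simp)]
  simp only [iterate_derivative_X_add_pow, Nat.sub_self, pow_zero, Nat.descFactorial_self,
    Nat.choose_self, one_smul, Function.iterate_zero_apply, nsmul_eq_mul, mul_one,
    eval_mul, eval_natCast, eval_pow, eval_sub, eval_X, eval_C, smul_eq_mul]
  rw [show (-1 - 1 : ℝ) = (-1) * 2 by ring, mul_pow]
  have h2 : (2:ℝ)^l * (l.factorial:ℝ) ≠ 0 := by positivity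
  field_simp

noncomputable def energyG (l : ℕ) : ℝ[X] :=
  C ((l:ℝ)*((l:ℝ)+1)) * (legendreP l)^2 + (1 - X^2) * (derivative (legendreP l))^2

lemma derivG (l : ℕ) (hl : 1 ≤ l) :
    derivative (energyG l) = C 2 * X * (derivative (legendreP l))^2 := by
  unfold energyG
  have h := odeP l hl
  simp only [derivative_add, derivative_mul, derivative_C_mul, derivative_pow, derivative_sub,
    derivative_one, derivative_X_pow, derivative_X, derivative_C, derivative_natCast, map_add, map_mul, map_pow,
    map_natCast, map_one, map_ofNat] at h ⊢
  push_cast at h ⊢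
  linear_combination (-2 * derivative (legendreP l)) * h

lemma key (l : ℕ) (hl : 1 ≤ l) :
    ∀ x ∈ Set.Icc (-1:ℝ) 1,
      (1 - x^2) * ((derivative (legendreP l)).eval x)^2 ≤ (l:ℝ)*((l:ℝ)+1) := by
  have hd : ∀ y : ℝ, deriv (fun t => (energyG l).eval t) y
      = 2*y*((derivative (legendreP l)).eval y)^2 := by
    intro y
    rw [Polynomial.deriv, derivG l hl]
    simp [eval_mul, eval_pow]
  have hdiff : Differentiable ℝ (fun t => (energyG l).eval t) := fun y =>
    (energyG l).differentiableAt
  have hmono : MonotoneOn (fun t => (energyG l).eval t) (Set.Icc (0:ℝ) 1) := by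
    apply monotoneOn_of_deriv_nonneg (convex_Icc 0 1) hdiff.continuous.continuousOn
      hdiff.differentiableOn
    intro y hy
    rw [interior_Icc] at hy
    rw [hd]
    have := hy.1
    positivity
  have hanti : AntitoneOn (fun t => (energyG l).eval t) (Set.Icc (-1:ℝ) 0) := by
    apply antitoneOn_of_deriv_nonpos (convex_Icc (-1) 0) hdiff.continuous.continuousOn
      hdiff.differentiableOn
    intro y hy
    rw [interior_Icc] at hy
    rw [hd]
    have h1 : y < 0 := hy.2
    nlinarith [sq_nonneg ((derivative (legendreP l)).eval y)]
  have hend : ∀ x ∈ Set.Icc (-1:ℝ) 1, (energyG l).eval x ≤ (l:ℝ)*((l:ℝ)+1) := by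
    intro x hx
    rcases le_or_gt 0 x with h0 | h0
    · have := hmono ⟨h0, hx.2⟩ (Set.right_mem_Icc.2 zero_le_one) hx.2
      refine this.trans ?_
      unfold energyG
      simp only [eval_add, eval_mul, eval_C, eval_pow, eval_sub, Polynomial.eval_one, eval_X,
        legendre_eval_one]
      norm_num
    · have := hanti (Set.left_mem_Icc.2 (by norm_num)) ⟨hx.1, h0.le⟩ hx.1
      refine this.trans ?_
      unfold energyG
      simp only [eval_add, eval_mul, eval_C, eval_pow, eval_sub, Polynomial.eval_one, eval_X,
        legendre_eval_neg_one]
      rw [← pow_mul, mul_comm l 2, pow_mul]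
      norm_num
  intro x hx
  have h1 := hend x hx
  unfold energyG at h1
  simp only [eval_add, eval_mul, eval_C, eval_pow, eval_sub, Polynomial.eval_one, eval_X] at h1
  have hA : 0 ≤ (l:ℝ)*((l:ℝ)+1) * ((legendreP l).eval x)^2 := by positivity
  linarith

lemma key' (l : ℕ) :
    ∀ x ∈ Set.Icc (-1:ℝ) 1,
      (1 - x^2) * ((derivative (legendreP l)).eval x)^2 ≤ (l:ℝ)*((l:ℝ)+1) := by
  rcases Nat.eq_zero_or_pos l with rfl | hl
  · intro x hx
    have : legendreP 0 = C 1 := by unfold legendreP; simp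
    rw [this]
    simp
  · exact key l hl

/-- `sup_{θ∈[0,π]} |d/dθ P_l(cos θ)| ≤ 3l`, hence for any `θ₀, θ ≥ 0` with `θ₀ + θ ≤ π`
one has `|P_l(cos(θ₀+θ)) − P_l(cos θ₀)| ≤ 3 l θ`. -/
theorem legendre_deriv_bound (l : ℕ) :
    (∀ θ ∈ Set.Icc (0 : ℝ) Real.pi,
      |deriv (fun t : ℝ => (legendreP l).eval (Real.cos t)) θ| ≤ 3 * l) ∧
    (∀ θ₀ θ : ℝ, 0 ≤ θ₀ → 0 ≤ θ → θ₀ + θ ≤ Real.pi →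
      |(legendreP l).eval (Real.cos (θ₀ + θ)) - (legendreP l).eval (Real.cos θ₀)|
        ≤ 3 * l * θ) := by
  have hP : ∀ θ : ℝ, HasDerivAt (fun t : ℝ => (legendreP l).eval (Real.cos t))
      ((derivative (legendreP l)).eval (Real.cos θ) * (-Real.sin θ)) θ := fun θ =>
    ((legendreP l).hasDerivAt (Real.cos θ)).comp θ (Real.hasDerivAt_cos θ)
  have hsq : (l:ℝ)*((l:ℝ)+1) ≤ (3*(l:ℝ))^2 := by
    rcases Nat.eq_zero_or_pos l with rfl | hl
    · norm_num
    · have h1 : (1:ℝ) ≤ (l:ℝ) := by exact_mod_cast hl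
      nlinarith
  have B : ∀ θ ∈ Set.Icc (0:ℝ) Real.pi,
      |(derivative (legendreP l)).eval (Real.cos θ) * (-Real.sin θ)| ≤ 3 * l := by
    intro θ hθ
    have hs : 0 ≤ Real.sin θ := Real.sin_nonneg_of_nonneg_of_le_pi hθ.1 hθ.2
    have hk := key' l (Real.cos θ) ⟨Real.neg_one_le_cos θ, Real.cos_le_one θ⟩
    have hsin : Real.sin θ ^ 2 = 1 - Real.cos θ ^ 2 := Real.sin_sq θ
    have h2 : (|(derivative (legendreP l)).eval (Real.cos θ) * (-Real.sin θ)|)^2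
        ≤ (3*(l:ℝ))^2 := by
      rw [sq_abs]
      calc ((derivative (legendreP l)).eval (Real.cos θ) * (-Real.sin θ))^2
          = (1 - Real.cos θ ^ 2) * ((derivative (legendreP l)).eval (Real.cos θ))^2 := by
            rw [← hsin]; ring
        _ ≤ (l:ℝ)*((l:ℝ)+1) := hk
        _ ≤ _ := hsq
    have h3 : (0:ℝ) ≤ 3 * l := by positivity
    nlinarith [abs_nonneg ((derivative (legendreP l)).eval (Real.cos θ) * (-Real.sin θ))]
  constructor
  · intro θ hθ
    rw [(hP θ).deriv]
    exact B θ hθ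
  · intro θ₀ θ h0 h1 h2
    have hmem1 : θ₀ ∈ Set.Icc (0:ℝ) Real.pi := ⟨h0, by linarith⟩
    have hmem2 : θ₀ + θ ∈ Set.Icc (0:ℝ) Real.pi := ⟨by linarith, h2⟩
    have := (convex_Icc (0:ℝ) Real.pi).norm_image_sub_le_of_norm_hasDerivWithin_le
      (f := fun t : ℝ => (legendreP l).eval (Real.cos t))
      (f' := fun t : ℝ => (derivative (legendreP l)).eval (Real.cos t) * (-Real.sin t))
      (fun x hx => (hP x).hasDerivWithinAt)
      (fun x hx => by rw [Real.norm_eq_abs]; exact B x hx) hmem1 hmem2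
    rw [Real.norm_eq_abs, Real.norm_eq_abs] at this
    calc |(legendreP l).eval (Real.cos (θ₀ + θ)) - (legendreP l).eval (Real.cos θ₀)|
        ≤ 3 * l * |θ₀ + θ - θ₀| := this
      _ = 3 * l * θ := by rw [show θ₀ + θ - θ₀ = θ by ring, abs_of_nonneg h1]
end

section
/- There exists a constant C > 0 such that for all nonnegative integers l₁ ≤ l₂ ≤ l₃ satisfying l₁ + l₂ ≥ l₃ and l₁+l₂+l₃ even, the Wigner 3j symbol with zero magnetic quantum numbers satisfies ( l₁ l₂ l₃ ; 0 0 0 )² ≥ C / l₃². -/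
set_option maxHeartbeats 1000000

/-- Factorial extended to the integers: `n!` for `n ≥ 0` and `0` for `n < 0`. -/
noncomputable def rfact (n : ℤ) : ℝ := if 0 ≤ n then (n.toNat).factorial else 0

/-- The Wigner 3j symbol, via the Racah single-sum formula. Terms with a negative
factorial argument vanish (note `x / 0 = 0` in Lean), and the symbol vanishes unless
`m₁ + m₂ + m₃ = 0`. -/
noncomputable def wigner3j (l₁ l₂ l₃ m₁ m₂ m₃ : ℤ) : ℝ :=
  if m₁ + m₂ + m₃ = 0 then
    (-1 : ℝ) ^ (l₁ - l₂ - m₃) *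
    Real.sqrt (rfact (l₁ + l₂ - l₃) * rfact (l₁ - l₂ + l₃) * rfact (-l₁ + l₂ + l₃) /
      rfact (l₁ + l₂ + l₃ + 1)) *
    Real.sqrt (rfact (l₁ + m₁) * rfact (l₁ - m₁) * rfact (l₂ + m₂) * rfact (l₂ - m₂) *
      rfact (l₃ + m₃) * rfact (l₃ - m₃)) *
    ∑ k ∈ Finset.Icc (0 : ℤ) (l₁ + l₂ + l₃),
      (-1 : ℝ) ^ k /
        (rfact k * rfact (l₁ + l₂ - l₃ - k) * rfact (l₁ - m₁ - k) *
          rfact (l₂ + m₂ - k) * rfact (l₃ - l₂ + m₁ + k) * rfact (l₃ - l₁ - m₂ + k))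
  else 0

/-! ### Basic properties of `rfact` -/

lemma rfact_nonneg (n : ℤ) : 0 ≤ rfact n := by
  unfold rfact; split <;> positivity

lemma rfact_natCast (n : ℕ) : rfact (n : ℤ) = (n.factorial : ℝ) := by
  simp [rfact]

lemma rfact_neg {n : ℤ} (h : n < 0) : rfact n = 0 := by
  simp [rfact, not_le.mpr h]

lemma rfact_succ {n : ℤ} (h : 0 ≤ n) : rfact (n + 1) = ((n : ℝ) + 1) * rfact n := by
  lift n to ℕ using h
  rw [show ((n : ℤ) + 1) = ((n + 1 : ℕ) : ℤ) by push_cast; ring, rfact_natCast, rfact_natCast,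
    Nat.factorial_succ]
  push_cast; ring

lemma rfact_pos {n : ℤ} (h : 0 ≤ n) : 0 < rfact n := by
  lift n to ℕ using h
  rw [rfact_natCast]
  exact_mod_cast n.factorial_pos

/-- Key lemma: `1/n! = (n+1)/(n+1)!`, valid for **all** integers `n` thanks to the
convention that `rfact` vanishes on negative integers and `0⁻¹ = 0`. -/
lemma inv_rfact (n m : ℤ) (h : m = n + 1) : (rfact n)⁻¹ = (m : ℝ) * (rfact m)⁻¹ := by
  subst h
  rcases lt_trichotomy n (-1) with h | h | h
  · rw [rfact_neg (by omega), rfact_neg (by omega)]; simp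
  · subst h; rw [rfact_neg (by omega)]; simp
  · have h0 : 0 ≤ n := by omega
    have h1 : (0:ℝ) < (n:ℝ) + 1 := by positivity
    rw [rfact_succ h0, mul_inv, ← mul_assoc]
    push_cast
    rw [mul_inv_cancel₀ (by positivity), one_mul]

/-! ### Dixon's identity via the WZ method -/

/-- The summand of the centered Racah sum for zero magnetic quantum numbers. -/
noncomputable def wterm (a b g : ℕ) (j : ℤ) : ℝ :=
  (-1:ℝ)^j / (rfact ((g:ℤ)+j) * rfact ((g:ℤ)-j) * rfact ((b:ℤ)-j) * rfact ((a:ℤ)-j) *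
    rfact ((b:ℤ)+j) * rfact ((a:ℤ)+j))

/-- The WZ certificate for Dixon's identity. -/
noncomputable def Gf (a b g : ℕ) (j : ℤ) : ℝ :=
  -(-1:ℝ)^j / (2 * rfact ((g:ℤ)+j) * rfact ((g:ℤ)+1-j) * rfact ((a:ℤ)+j-1) *
    rfact ((a:ℤ)-j) * rfact ((b:ℤ)+j-1) * rfact ((b:ℤ)-j))

/-- Termwise WZ certificate identity. -/
lemma cert (a b g : ℕ) (j : ℤ) :
    ((g:ℝ)+1) * ((b:ℝ)+(g:ℝ)+1) * ((a:ℝ)+(g:ℝ)+1) * wterm a b (g+1) j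
      - ((a:ℝ)+(b:ℝ)+(g:ℝ)+1) * wterm a b g j = Gf a b g (j+1) - Gf a b g j := by
  unfold wterm Gf
  rw [show ((g+1:ℕ):ℤ) = (g:ℤ)+1 by push_cast; ring]
  rw [show ((g:ℤ)+1+j) = (g:ℤ)+j+1 by ring]
  rw [show ((g:ℤ)+(j+1)) = (g:ℤ)+j+1 by ring]
  rw [show ((g:ℤ)+1-(j+1)) = (g:ℤ)-j by ring]
  rw [show ((a:ℤ)+(j+1)-1) = (a:ℤ)+j by ring]
  rw [show ((a:ℤ)-(j+1)) = (a:ℤ)-j-1 by ring]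
  rw [show ((b:ℤ)+(j+1)-1) = (b:ℤ)+j by ring]
  rw [show ((b:ℤ)-(j+1)) = (b:ℤ)-j-1 by ring]
  rw [zpow_add_one₀ (by norm_num : (-1:ℝ) ≠ 0)]
  simp only [div_eq_mul_inv, mul_inv]
  rw [inv_rfact ((g:ℤ)+j) ((g:ℤ)+j+1) (by ring)]
  rw [inv_rfact ((g:ℤ)-j) ((g:ℤ)+1-j) (by ring)]
  rw [inv_rfact ((a:ℤ)+j-1) ((a:ℤ)+j) (by ring)]
  rw [inv_rfact ((a:ℤ)-j-1) ((a:ℤ)-j) (by ring)]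
  rw [inv_rfact ((b:ℤ)+j-1) ((b:ℤ)+j) (by ring)]
  rw [inv_rfact ((b:ℤ)-j-1) ((b:ℤ)-j) (by ring)]
  push_cast
  ring

/-- The centered Racah sum. -/
noncomputable def ws (a b g : ℕ) : ℝ := ∑ j ∈ Finset.Icc (-(g:ℤ)) (g:ℤ), wterm a b g j

lemma telescope (f : ℤ → ℝ) (lo : ℤ) : ∀ n : ℕ,
    ∑ j ∈ Finset.Icc lo (lo + (n:ℤ)), (f (j+1) - f j) = f (lo + (n:ℤ) + 1) - f lo := by
  intro n
  induction n with
  | zero => simp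
  | succ n ih =>
    have h : Finset.Icc lo (lo + ((n+1:ℕ):ℤ)) =
        insert (lo + (n:ℤ) + 1) (Finset.Icc lo (lo + (n:ℤ))) := by
      ext x
      simp only [Finset.mem_Icc, Finset.mem_insert]
      push_cast
      omega
    rw [h, Finset.sum_insert (by simp only [Finset.mem_Icc]; omega), ih]
    push_cast
    ring_nf

lemma wterm_out {a b g : ℕ} {j : ℤ} (h : (g:ℤ) < |j|) : wterm a b g j = 0 := by
  unfold wterm
  rcases abs_cases j with ⟨h1, _⟩ | ⟨h1, _⟩
  · rw [rfact_neg (by omega : (g:ℤ) - j < 0)]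
    simp
  · rw [rfact_neg (by omega : (g:ℤ) + j < 0)]
    simp

lemma Gf_bot (a b g : ℕ) : Gf a b g (-(g:ℤ)-1) = 0 := by
  unfold Gf
  rw [rfact_neg (by omega : (g:ℤ) + (-(g:ℤ)-1) < 0)]
  simp

lemma Gf_top (a b g : ℕ) : Gf a b g ((g:ℤ)+2) = 0 := by
  unfold Gf
  rw [rfact_neg (by omega : (g:ℤ) + 1 - ((g:ℤ)+2) < 0)]
  simp

/-- The recurrence in `g` obtained by summing the certificate identity. -/
lemma ws_rec (a b g : ℕ) :
    ((g:ℝ)+1) * ((b:ℝ)+(g:ℝ)+1) * ((a:ℝ)+(g:ℝ)+1) * ws a b (g+1)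
      = ((a:ℝ)+(b:ℝ)+(g:ℝ)+1) * ws a b g := by
  have hIcc : Finset.Icc (-((g+1:ℕ):ℤ)) ((g+1:ℕ):ℤ) = Finset.Icc (-(g:ℤ)-1) ((g:ℤ)+1) := by
    congr 1 <;> (push_cast; ring)
  have h1 : ws a b (g+1) = ∑ j ∈ Finset.Icc (-(g:ℤ)-1) ((g:ℤ)+1), wterm a b (g+1) j := by
    rw [ws, hIcc]
  have h2 : ws a b g = ∑ j ∈ Finset.Icc (-(g:ℤ)-1) ((g:ℤ)+1), wterm a b g j := by
    rw [ws]
    apply Finset.sum_subset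
    · intro x hx
      simp only [Finset.mem_Icc] at hx ⊢
      omega
    · intro x hx hx'
      simp only [Finset.mem_Icc] at hx hx'
      exact wterm_out (by rcases abs_cases x with ⟨h,_⟩|⟨h,_⟩ <;> omega)
  have htel : ∑ j ∈ Finset.Icc (-(g:ℤ)-1) ((g:ℤ)+1), (Gf a b g (j+1) - Gf a b g j) = 0 := by
    have := telescope (Gf a b g) (-(g:ℤ)-1) (2*g+2)
    rw [show (-(g:ℤ)-1 + ((2*g+2:ℕ):ℤ)) = (g:ℤ)+1 by push_cast; ring] at this
    rw [this, show ((g:ℤ)+1+1) = (g:ℤ)+2 by ring, Gf_top, Gf_bot]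
    ring
  have hsum : ∑ j ∈ Finset.Icc (-(g:ℤ)-1) ((g:ℤ)+1),
      (((g:ℝ)+1) * ((b:ℝ)+(g:ℝ)+1) * ((a:ℝ)+(g:ℝ)+1) * wterm a b (g+1) j
        - ((a:ℝ)+(b:ℝ)+(g:ℝ)+1) * wterm a b g j) = 0 := by
    rw [Finset.sum_congr rfl (fun j _ => cert a b g j), htel]
  rw [Finset.sum_sub_distrib, ← Finset.mul_sum, ← Finset.mul_sum] at hsum
  rw [h1, h2]
  linarith

/-- Dixon's identity: closed-form evaluation of the centered Racah sum. -/
lemma ws_eq (a b : ℕ) : ∀ g : ℕ, ws a b g = ((a+b+g).factorial : ℝ) /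
    (a.factorial * b.factorial * g.factorial * (a+b).factorial *
      (b+g).factorial * (a+g).factorial) := by
  intro g
  induction g with
  | zero =>
    rw [ws]
    simp only [Nat.cast_zero, neg_zero, Finset.Icc_self, Finset.sum_singleton, wterm]
    simp only [add_zero, sub_zero, zero_add, zero_sub, zpow_zero]
    rw [show (0:ℤ) = ((0:ℕ):ℤ) by norm_num, rfact_natCast, rfact_natCast, rfact_natCast]
    simp only [Nat.factorial_zero, Nat.cast_one, one_mul, mul_one]
    have ha := a.factorial_pos
    have hb := b.factorial_pos
    have hab := (a+b).factorial_pos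
    have h1 : ((a+b).factorial : ℝ) ≠ 0 := by positivity
    have h2 : ((a).factorial : ℝ) ≠ 0 := by positivity
    have h3 : ((b).factorial : ℝ) ≠ 0 := by positivity
    field_simp
  | succ g ih =>
    have hrec := ws_rec a b g
    rw [ih] at hrec
    have hA : (0:ℝ) < ((g:ℝ)+1) * ((b:ℝ)+(g:ℝ)+1) * ((a:ℝ)+(g:ℝ)+1) := by positivity
    have h2 : ws a b (g+1) = (((a:ℝ)+(b:ℝ)+(g:ℝ)+1) * (((a+b+g).factorial : ℝ) /
        (a.factorial * b.factorial * g.factorial * (a+b).factorial *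
          (b+g).factorial * (a+g).factorial))) /
        (((g:ℝ)+1) * ((b:ℝ)+(g:ℝ)+1) * ((a:ℝ)+(g:ℝ)+1)) := by
      rw [eq_div_iff (ne_of_gt hA)]
      linarith
    rw [h2]
    rw [show a+b+(g+1) = (a+b+g)+1 by ring, show b+(g+1) = (b+g)+1 by ring,
      show a+(g+1) = (a+g)+1 by ring, Nat.factorial_succ, Nat.factorial_succ,
      Nat.factorial_succ, Nat.factorial_succ]
    have f1 := a.factorial_pos
    have f2 := b.factorial_pos
    have f3 := g.factorial_pos
    have f4 := (a+b).factorial_pos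
    have f5 := (b+g).factorial_pos
    have f6 := (a+g).factorial_pos
    have g1 : ((a.factorial : ℝ)) ≠ 0 := by positivity
    have g2 : ((b.factorial : ℝ)) ≠ 0 := by positivity
    have g3 : ((g.factorial : ℝ)) ≠ 0 := by positivity
    have g4 : (((a+b).factorial : ℝ)) ≠ 0 := by positivity
    have g5 : (((b+g).factorial : ℝ)) ≠ 0 := by positivity
    have g6 : (((a+g).factorial : ℝ)) ≠ 0 := by positivity
    push_cast
    field_simp

/-! ### Evaluation of the Wigner 3j symbol at zero magnetic quantum numbers -/

noncomputable def sterm (α β γ : ℕ) (x : ℤ) : ℝ :=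
  (-1:ℝ) ^ x / (rfact x * rfact ((β:ℤ)+γ+((α:ℤ)+γ)-((α:ℤ)+β)-x) * rfact ((β:ℤ)+γ-x) *
    rfact ((α:ℤ)+γ-x) * rfact ((α:ℤ)+β-((α:ℤ)+γ)+x) * rfact ((α:ℤ)+β-((β:ℤ)+γ)+x))

lemma sum_eq (α β γ : ℕ) :
    ∑ x ∈ Finset.Icc (0:ℤ) ((β:ℤ)+γ+((α:ℤ)+γ)+((α:ℤ)+β)), sterm α β γ x
      = (-1:ℝ)^γ * ws α β γ := by
  have hsub : Finset.Icc (0:ℤ) (2*(γ:ℤ)) ⊆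
      Finset.Icc (0:ℤ) ((β:ℤ)+γ+((α:ℤ)+γ)+((α:ℤ)+β)) :=
    Finset.Icc_subset_Icc_right (by omega)
  have hv : ∀ x ∈ Finset.Icc (0:ℤ) ((β:ℤ)+γ+((α:ℤ)+γ)+((α:ℤ)+β)),
      x ∉ Finset.Icc (0:ℤ) (2*(γ:ℤ)) → sterm α β γ x = 0 := by
    intro x hx hx'
    simp only [Finset.mem_Icc] at hx hx'
    unfold sterm
    rw [rfact_neg (show (β:ℤ)+γ+((α:ℤ)+γ)-((α:ℤ)+β)-x < 0 by omega)]
    simp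
  rw [← Finset.sum_subset hsub hv]
  rw [show Finset.Icc (0:ℤ) (2*(γ:ℤ)) =
      Finset.map (addLeftEmbedding (γ:ℤ)) (Finset.Icc (-(γ:ℤ)) (γ:ℤ)) by
    rw [Finset.map_add_left_Icc]
    congr 1
    · ring
    · ring]
  rw [Finset.sum_map, ws, Finset.mul_sum]
  apply Finset.sum_congr rfl
  intro j hj
  simp only [addLeftEmbedding_apply, sterm]
  rw [show (β:ℤ)+γ+((α:ℤ)+γ)-((α:ℤ)+β)-((γ:ℤ)+j) = (γ:ℤ)-j by ring]
  rw [show (β:ℤ)+γ-((γ:ℤ)+j) = (β:ℤ)-j by ring]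
  rw [show (α:ℤ)+γ-((γ:ℤ)+j) = (α:ℤ)-j by ring]
  rw [show (α:ℤ)+β-((α:ℤ)+γ)+((γ:ℤ)+j) = (β:ℤ)+j by ring]
  rw [show (α:ℤ)+β-((β:ℤ)+γ)+((γ:ℤ)+j) = (α:ℤ)+j by ring]
  rw [zpow_add₀ (by norm_num : (-1:ℝ) ≠ 0), zpow_natCast]
  rw [wterm]
  ring

lemma neg_one_zpow_sq (z : ℤ) : ((-1:ℝ)^z)^2 = 1 := by
  rw [sq, ← zpow_add₀ (by norm_num : (-1:ℝ) ≠ 0), show z + z = 2*z by ring, zpow_mul]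
  norm_num

/-- Closed form for the square of the Wigner 3j symbol with zero magnetic numbers. -/
lemma wigner_sq (α β γ : ℕ) :
    (wigner3j ((β+γ:ℕ):ℤ) ((α+γ:ℕ):ℤ) ((α+β:ℕ):ℤ) 0 0 0)^2
      = (((2*α).factorial : ℝ) * (2*β).factorial * (2*γ).factorial *
          ((α+β+γ).factorial : ℝ)^2)
          / (((2*(α+β+γ)+1).factorial : ℝ) *
            ((α.factorial : ℝ) * β.factorial * γ.factorial)^2) := by
  have hsum := sum_eq α β γ
  simp only [sterm] at hsum
  simp only [wigner3j, if_pos (show (0:ℤ)+0+0 = 0 by norm_num), add_zero, sub_zero]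
  push_cast
  rw [hsum]
  simp only [mul_pow]
  rw [neg_one_zpow_sq]
  have hX : (0:ℝ) ≤ rfact ((β:ℤ)+γ+((α:ℤ)+γ)-((α:ℤ)+β)) * rfact ((β:ℤ)+γ-((α:ℤ)+γ)+((α:ℤ)+β)) *
      rfact (-((β:ℤ)+γ)+((α:ℤ)+γ)+((α:ℤ)+β)) / rfact ((β:ℤ)+γ+((α:ℤ)+γ)+((α:ℤ)+β)+1) :=
    div_nonneg (mul_nonneg (mul_nonneg (rfact_nonneg _) (rfact_nonneg _)) (rfact_nonneg _))
      (rfact_nonneg _)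
  have hY : (0:ℝ) ≤ rfact ((β:ℤ)+γ) * rfact ((β:ℤ)+γ) * rfact ((α:ℤ)+γ) * rfact ((α:ℤ)+γ) *
      rfact ((α:ℤ)+β) * rfact ((α:ℤ)+β) := by
    have := rfact_nonneg ((β:ℤ)+γ)
    have := rfact_nonneg ((α:ℤ)+γ)
    have := rfact_nonneg ((α:ℤ)+β)
    positivity
  rw [Real.sq_sqrt hX, Real.sq_sqrt hY]
  rw [show (β:ℤ)+γ+((α:ℤ)+γ)-((α:ℤ)+β) = ((2*γ:ℕ):ℤ) by push_cast; ring, rfact_natCast]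
  rw [show (β:ℤ)+γ-((α:ℤ)+γ)+((α:ℤ)+β) = ((2*β:ℕ):ℤ) by push_cast; ring, rfact_natCast]
  rw [show -((β:ℤ)+γ)+((α:ℤ)+γ)+((α:ℤ)+β) = ((2*α:ℕ):ℤ) by push_cast; ring, rfact_natCast]
  rw [show (β:ℤ)+γ+((α:ℤ)+γ)+((α:ℤ)+β)+1 = ((2*(α+β+γ)+1:ℕ):ℤ) by push_cast; ring,
    rfact_natCast]
  rw [show (β:ℤ)+γ = ((β+γ:ℕ):ℤ) by push_cast; ring, rfact_natCast]
  rw [show (α:ℤ)+γ = ((α+γ:ℕ):ℤ) by push_cast; ring, rfact_natCast]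
  rw [show (α:ℤ)+β = ((α+β:ℕ):ℤ) by push_cast; ring, rfact_natCast]
  rw [ws_eq]
  rw [show ((-1:ℝ)^γ)^2 = 1 by rw [← pow_mul, mul_comm, pow_mul]; norm_num, one_mul]
  have n1 : ((α.factorial : ℝ)) ≠ 0 := by exact_mod_cast α.factorial_pos.ne'
  have n2 : ((β.factorial : ℝ)) ≠ 0 := by exact_mod_cast β.factorial_pos.ne'
  have n3 : ((γ.factorial : ℝ)) ≠ 0 := by exact_mod_cast γ.factorial_pos.ne'
  have n4 : (((α+β).factorial : ℝ)) ≠ 0 := by exact_mod_cast (α+β).factorial_pos.ne'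
  have n5 : (((β+γ).factorial : ℝ)) ≠ 0 := by exact_mod_cast (β+γ).factorial_pos.ne'
  have n6 : (((α+γ).factorial : ℝ)) ≠ 0 := by exact_mod_cast (α+γ).factorial_pos.ne'
  have n7 : (((2*(α+β+γ)+1).factorial : ℝ)) ≠ 0 := by
    exact_mod_cast (2*(α+β+γ)+1).factorial_pos.ne'
  field_simp

/-! ### Central binomial coefficient bounds -/

lemma cb_lower : ∀ n : ℕ, (4:ℝ)^n ≤ Real.sqrt (4*n+1) * n.centralBinom := by
  intro n
  induction n with
  | zero => simp [Nat.centralBinom_zero]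
  | succ n ih =>
    have hcb : (0:ℝ) < n.centralBinom := by exact_mod_cast n.centralBinom_pos
    set x := Real.sqrt (4*(n:ℝ)+1) with hxdef
    set y := Real.sqrt (4*((n+1:ℕ):ℝ)+1) with hydef
    have hx2 : x^2 = 4*(n:ℝ)+1 := Real.sq_sqrt (by positivity)
    have hy2 : y^2 = 4*((n+1:ℕ):ℝ)+1 := Real.sq_sqrt (by positivity)
    have hxp : 0 < x := Real.sqrt_pos.mpr (by positivity)
    have hyp : 0 < y := Real.sqrt_pos.mpr (by positivity)
    have key : 2*((n:ℝ)+1)*x ≤ (2*(n:ℝ)+1)*y := by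
      have h2 : (2*((n:ℝ)+1)*x)^2 ≤ ((2*(n:ℝ)+1)*y)^2 := by
        simp only [mul_pow]; rw [hx2, hy2]
        push_cast
        nlinarith [sq_nonneg ((n:ℝ))]
      exact le_of_pow_le_pow_left₀ two_ne_zero (by positivity) h2
    have hrec : ((n:ℝ)+1) * ((n+1).centralBinom : ℝ) = 2*(2*(n:ℝ)+1) * (n.centralBinom : ℝ) := by
      exact_mod_cast Nat.succ_mul_centralBinom_succ n
    have c3 : ((n:ℝ)+1)*(y*((n+1).centralBinom : ℝ)) = 2*((2*(n:ℝ)+1)*y*(n.centralBinom:ℝ)) := by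
      linear_combination y * hrec
    have c1 : 2*((n:ℝ)+1)*x*(n.centralBinom:ℝ) ≤ (2*(n:ℝ)+1)*y*(n.centralBinom:ℝ) :=
      mul_le_mul_of_nonneg_right key hcb.le
    have c2 : 2*((n:ℝ)+1)*(4:ℝ)^n ≤ 2*((n:ℝ)+1)*(x*(n.centralBinom:ℝ)) := by nlinarith
    have c4 : ((n:ℝ)+1)*(4:ℝ)^(n+1) ≤ ((n:ℝ)+1)*(y*((n+1).centralBinom : ℝ)) := by
      rw [c3, pow_succ]
      nlinarith [c1, c2]
    exact le_of_mul_le_mul_left c4 (by positivity)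

lemma cb_upper : ∀ n : ℕ, Real.sqrt ((n:ℝ)+1) * n.centralBinom ≤ (4:ℝ)^n := by
  intro n
  induction n with
  | zero => simp [Nat.centralBinom_zero]
  | succ n ih =>
    have hcb : (0:ℝ) < n.centralBinom := by exact_mod_cast n.centralBinom_pos
    set x := Real.sqrt ((n:ℝ)+1) with hxdef
    set y := Real.sqrt (((n+1:ℕ):ℝ)+1) with hydef
    have hx2 : x^2 = (n:ℝ)+1 := Real.sq_sqrt (by positivity)
    have hy2 : y^2 = ((n+1:ℕ):ℝ)+1 := Real.sq_sqrt (by positivity)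
    have hxp : 0 < x := Real.sqrt_pos.mpr (by positivity)
    have hyp : 0 < y := Real.sqrt_pos.mpr (by positivity)
    have key : (2*(n:ℝ)+1)*y ≤ 2*((n:ℝ)+1)*x := by
      have h2 : ((2*(n:ℝ)+1)*y)^2 ≤ (2*((n:ℝ)+1)*x)^2 := by
        simp only [mul_pow]; rw [hx2, hy2]
        push_cast
        nlinarith [sq_nonneg ((n:ℝ))]
      exact le_of_pow_le_pow_left₀ two_ne_zero (by positivity) h2
    have hrec : ((n:ℝ)+1) * ((n+1).centralBinom : ℝ) = 2*(2*(n:ℝ)+1) * (n.centralBinom : ℝ) := by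
      exact_mod_cast Nat.succ_mul_centralBinom_succ n
    have c3 : ((n:ℝ)+1)*(y*((n+1).centralBinom : ℝ)) = 2*((2*(n:ℝ)+1)*y*(n.centralBinom:ℝ)) := by
      linear_combination y * hrec
    have c1 : (2*(n:ℝ)+1)*y*(n.centralBinom:ℝ) ≤ 2*((n:ℝ)+1)*x*(n.centralBinom:ℝ) :=
      mul_le_mul_of_nonneg_right key hcb.le
    have c2 : 2*((n:ℝ)+1)*(x*(n.centralBinom:ℝ)) ≤ 2*((n:ℝ)+1)*(4:ℝ)^n := by nlinarith
    have c4 : ((n:ℝ)+1)*(y*((n+1).centralBinom : ℝ)) ≤ ((n:ℝ)+1)*(4:ℝ)^(n+1) := by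
      rw [c3, pow_succ]
      nlinarith [c1, c2]
    exact le_of_mul_le_mul_left c4 (by positivity)

lemma two_mul_factorial (n : ℕ) :
    ((2*n).factorial : ℝ) = (n.centralBinom : ℝ) * ((n.factorial : ℝ))^2 := by
  have h := Nat.choose_mul_factorial_mul_factorial (show n ≤ 2*n by omega)
  rw [show 2*n - n = n by omega] at h
  rw [sq, show (n.centralBinom:ℝ) = (((2*n).choose n : ℕ):ℝ) by norm_num [Nat.centralBinom]]
  rw [← mul_assoc]
  exact_mod_cast h.symm

lemma core_ineq (x y z : ℝ) (hz0 : 0 ≤ z) (hzy : z ≤ y) (hyx : y ≤ x) (h1 : 1 ≤ x+y) :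
    (2*(x+y+z)+1)^2 * ((4*x+1)*(4*y+1)*(4*z+1)) ≤ (100*(x+y)^2)^2*((x+y+z)+1) := by
  have q1 : 4*x+1 ≤ 5*(x+y) := by nlinarith
  have q2 : 4*y+1 ≤ 5*(x+y) := by nlinarith
  have q3 : 4*z+1 ≤ 5*(x+y) := by nlinarith
  have q4 : 2*(x+y+z)+1 ≤ 5*(x+y) := by nlinarith
  have ht : (0:ℝ) < x+y := by nlinarith
  have r1 : (2*(x+y+z)+1)^2 ≤ 25*(x+y)^2 := by nlinarith
  have r2 : (4*x+1)*(4*y+1) ≤ 25*(x+y)^2 := by nlinarith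
  have r3 : (4*x+1)*(4*y+1)*(4*z+1) ≤ 125*(x+y)^3 := by nlinarith
  have hx0 : (0:ℝ) ≤ x := le_trans hz0 (le_trans hzy hyx)
  have hy0 : (0:ℝ) ≤ y := le_trans hz0 hzy
  have r4 : (2*(x+y+z)+1)^2 * ((4*x+1)*(4*y+1)*(4*z+1)) ≤ 25*(x+y)^2 * (125*(x+y)^3) :=
    mul_le_mul r1 r3 (mul_nonneg (mul_nonneg (by linarith) (by linarith)) (by linarith))
      (by positivity)
  have r5 : (x+y)^5 ≤ (x+y)^4 * (x+y+z+1) := by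
    have h4 : (0:ℝ) < (x+y)^4 := by positivity
    nlinarith
  nlinarith [r4, r5]

lemma final_bound (α β γ : ℕ) (hγβ : γ ≤ β) (hβα : β ≤ α) (hs : 1 ≤ α + β) :
    (1/100 : ℝ) / (((α+β : ℕ)):ℝ)^2 ≤
      (((2*α).factorial : ℝ) * (2*β).factorial * (2*γ).factorial *
        ((α+β+γ).factorial : ℝ)^2)
        / (((2*(α+β+γ)+1).factorial : ℝ) *
          ((α.factorial : ℝ) * β.factorial * γ.factorial)^2) := by
  set g : ℕ := α+β+γ with hg
  have hfac : (((2*(α+β+γ)+1).factorial : ℕ) : ℝ) = (2*(g:ℝ)+1) * ((2*g).factorial : ℝ) := by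
    rw [← hg, Nat.factorial_succ]
    push_cast
    ring
  have cbR : ∀ n : ℕ, (0:ℝ) < n.centralBinom := fun n => by exact_mod_cast n.centralBinom_pos
  have facR : ∀ n : ℕ, (0:ℝ) < (n.factorial : ℝ) := fun n => by exact_mod_cast n.factorial_pos
  have hRHS : (((2*α).factorial : ℝ) * (2*β).factorial * (2*γ).factorial *
        ((α+β+γ).factorial : ℝ)^2)
        / (((2*(α+β+γ)+1).factorial : ℝ) *
          ((α.factorial : ℝ) * β.factorial * γ.factorial)^2)
      = ((α.centralBinom : ℝ) * β.centralBinom * γ.centralBinom) /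
          ((2*(g:ℝ)+1) * g.centralBinom) := by
    rw [hfac, two_mul_factorial, two_mul_factorial, two_mul_factorial, two_mul_factorial, ← hg]
    have h1 := cbR g; have h2 := facR g; have h3 := facR α; have h4 := facR β
    have h5 := facR γ
    have hp : (0:ℝ) < 2*(g:ℝ)+1 := by positivity
    field_simp
  rw [hRHS]
  set xa := Real.sqrt (4*(α:ℝ)+1) with hxa
  set xb := Real.sqrt (4*(β:ℝ)+1) with hxb
  set xc := Real.sqrt (4*(γ:ℝ)+1) with hxc
  set u := Real.sqrt ((g:ℝ)+1) with hu
  have hxap : 0 < xa := Real.sqrt_pos.mpr (by positivity)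
  have hxbp : 0 < xb := Real.sqrt_pos.mpr (by positivity)
  have hxcp : 0 < xc := Real.sqrt_pos.mpr (by positivity)
  have hup : 0 < u := Real.sqrt_pos.mpr (by positivity)
  have hxa2 : xa^2 = 4*(α:ℝ)+1 := Real.sq_sqrt (by positivity)
  have hxb2 : xb^2 = 4*(β:ℝ)+1 := Real.sq_sqrt (by positivity)
  have hxc2 : xc^2 = 4*(γ:ℝ)+1 := Real.sq_sqrt (by positivity)
  have hu2 : u^2 = (g:ℝ)+1 := Real.sq_sqrt (by positivity)
  set s : ℝ := ((α+β : ℕ) : ℝ) with hsdef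
  have hs1 : (1:ℝ) ≤ s := by rw [hsdef]; exact_mod_cast hs
  have hsp : (0:ℝ) < s := by linarith
  have hAB : (2*(g:ℝ)+1)*(xa*xb*xc) ≤ 100*s^2*u := by
    have hcast : (g:ℝ) = (α:ℝ)+(β:ℝ)+(γ:ℝ) := by rw [hg]; push_cast; ring
    have hscast : s = (α:ℝ)+(β:ℝ) := by rw [hsdef]; push_cast; ring
    have hzy : (γ:ℝ) ≤ (β:ℝ) := by exact_mod_cast hγβ
    have hyx : (β:ℝ) ≤ (α:ℝ) := by exact_mod_cast hβα
    have hz0 : (0:ℝ) ≤ (γ:ℝ) := by positivity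
    have hsq : ((2*(g:ℝ)+1)*(xa*xb*xc))^2 ≤ (100*s^2*u)^2 := by
      simp only [mul_pow]
      rw [hxa2, hxb2, hxc2, hu2, hcast, hscast]
      have h1xy : (1:ℝ) ≤ (α:ℝ)+(β:ℝ) := by rw [hscast] at hs1; exact hs1
      nlinarith [core_ineq (α:ℝ) (β:ℝ) (γ:ℝ) hz0 hzy hyx h1xy]
    exact le_of_pow_le_pow_left₀ two_ne_zero (by positivity) hsq
  have lba := cb_lower α
  have lbb := cb_lower β
  have lbc := cb_lower γ
  have ub := cb_upper g
  have hcba := cbR α; have hcbb := cbR β; have hcbc := cbR γ; have hcbg := cbR g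
  rw [← hxa] at lba
  rw [← hxb] at lbb
  rw [← hxc] at lbc
  rw [← hu] at ub
  have chain : ((2*(g:ℝ)+1)*(g.centralBinom:ℝ)) * (u*xa*xb*xc)
      ≤ (100*((α.centralBinom:ℝ)*β.centralBinom*γ.centralBinom*s^2)) * (u*xa*xb*xc) := by
    calc ((2*(g:ℝ)+1)*(g.centralBinom:ℝ)) * (u*xa*xb*xc)
        = (2*(g:ℝ)+1)*xa*xb*xc*(u*(g.centralBinom:ℝ)) := by ring
      _ ≤ (2*(g:ℝ)+1)*xa*xb*xc*(4:ℝ)^g := by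
          have hpre : (0:ℝ) ≤ (2*(g:ℝ)+1)*xa*xb*xc := by positivity
          exact mul_le_mul_of_nonneg_left ub hpre
      _ = ((2*(g:ℝ)+1)*(xa*xb*xc))*(4:ℝ)^g := by ring
      _ ≤ (100*s^2*u)*(4:ℝ)^g := mul_le_mul_of_nonneg_right hAB (by positivity)
      _ = 100*s^2*u*((4:ℝ)^α*(4:ℝ)^β*(4:ℝ)^γ) := by
          rw [hg, pow_add, pow_add]
      _ ≤ 100*s^2*u*((xa*(α.centralBinom:ℝ))*(xb*(β.centralBinom:ℝ))*(xc*(γ.centralBinom:ℝ))) := by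
          have h1 : (0:ℝ) ≤ 100*s^2*u := by positivity
          exact mul_le_mul_of_nonneg_left
            (mul_le_mul (mul_le_mul lba lbb (by positivity) (by positivity)) lbc
              (by positivity) (by positivity)) h1
      _ = (100*((α.centralBinom:ℝ)*β.centralBinom*γ.centralBinom*s^2)) * (u*xa*xb*xc) := by
          ring
  have hpos4 : (0:ℝ) < u*xa*xb*xc := by positivity
  have hmain : (2*(g:ℝ)+1)*(g.centralBinom:ℝ) ≤
      100*((α.centralBinom:ℝ)*β.centralBinom*γ.centralBinom*s^2) :=
    le_of_mul_le_mul_right chain hpos4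
  rw [div_le_div_iff₀ (by positivity) (by positivity)]
  nlinarith [hmain]

/-- There is a constant `C > 0` such that for all `l₁ ≤ l₂ ≤ l₃` with `l₁ + l₂ ≥ l₃` and
`l₁ + l₂ + l₃` even, `(l₁ l₂ l₃; 0 0 0)² ≥ C / l₃²`. -/
theorem wigner3j_zero_lower_bound :
    ∃ C > 0, ∀ l₁ l₂ l₃ : ℕ, l₁ ≤ l₂ → l₂ ≤ l₃ → l₃ ≤ l₁ + l₂ →
      Even (l₁ + l₂ + l₃) →
      C / (l₃ : ℝ) ^ 2 ≤ (wigner3j l₁ l₂ l₃ 0 0 0) ^ 2 := by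
  refine ⟨1/100, by norm_num, ?_⟩
  intro l₁ l₂ l₃ h12 h23 htri heven
  obtain ⟨c, hc⟩ := heven
  obtain ⟨α, β, γ, e1, e2, e3, hγβ, hβα⟩ :
      ∃ α β γ : ℕ, l₁ = β + γ ∧ l₂ = α + γ ∧ l₃ = α + β ∧ γ ≤ β ∧ β ≤ α :=
    ⟨c - l₁, c - l₂, c - l₃, by omega, by omega, by omega, by omega, by omega⟩
  subst e1 e2 e3
  rcases Nat.eq_zero_or_pos (α + β) with h0 | hpos
  · rw [h0]
    norm_num
    positivity
  · exact le_of_le_of_eq (final_bound α β γ hγβ hβα hpos) (wigner_sq α β γ).symm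
end
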